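/- Let D be a completely integrable (involutive) distribution given as the common kernel of 1-forms ω¹,…,ωⁿ, and let X be a complete vector field belonging to D. Then for every t, the pulled-back forms (Fl^X_t)*ωⁱ vanish on D. -/

import Mathlib

noncomputable section

variable {E : Type*} [NormedAddCommGroup E] [NormedSpace ℝ E]

/-- Lie bracket of vector fields on a vector space. -/
def lieBracket (X Y : E → E) : E → E :=
  fun x => fderiv ℝ Y x (X x) - fderiv ℝ X x (Y x)

/-- Smooth sections of the distribution `D`. -/
def Sec (D : E → Submodule ℝ E) : Set (E → E) :=
  {X | ContDiff ℝ (⊤ : ℕ∞) X ∧ ∀ x : E, X x ∈ D x}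

/-!
Put `g(t) = (ωʲ(φₜ x)(Dφₜ(x) v))ⱼ`. Then `g'(t)ⱼ = (L_X ωʲ)(φₜ x)(Dφₜ(x) v)`, where
`L_X α = Dα(X) + α ∘ DX` is the Lie derivative. Involutivity makes `L_X ωʲ` vanish on `D`: for a
section `U` of `D`, differentiating `ωʲ(U) = 0` along `X` and using `ωʲ([X, U]) = 0` gives
`(L_X ωʲ)(U) = 0`, and every vector of `D` lies on a smooth section. So near each point `L_X ωʲ` is
a combination of the `ωᵏ` with bounded coefficients, whence `‖g'‖ ≤ K ‖g‖` locally, and `g(0) = 0`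
forces `g ≡ 0` by Grönwall.

The flow is only assumed smooth in space for each fixed time, so the variational equation
`∂ₜ Dφₜ(x) = DX(φₜ x) ∘ Dφₜ(x)` is proved by hand: the group law reduces it to `t = 0`, where
comparing two nearby trajectories by Grönwall gives `‖Dφₛ(y) - 1 - s • DX(y)‖ = o(s)`.
-/

open Set Filter Topology Metric

theorem eventually_nhdsGE_eq_zero_of_norm_deriv_le {F : Type*} [NormedAddCommGroup F]
    [NormedSpace ℝ F] {g g' : ℝ → F} {K t₀ : ℝ} (hg : ∀ t, HasDerivAt g (g' t) t)
    (hK : ∀ᶠ t in 𝓝 t₀, ‖g' t‖ ≤ K * ‖g t‖) (h₀ : g t₀ = 0) :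
    ∀ᶠ t in 𝓝[≥] t₀, g t = 0 := by
  obtain ⟨b, hb, hKb⟩ := mem_nhdsGE_iff_exists_Icc_subset.1 (nhdsWithin_le_nhds hK)
  filter_upwards [Icc_mem_nhdsGE hb] with t ht
  exact eq_zero_of_abs_deriv_le_mul_abs_self_of_eq_zero_right
    (fun t _ => (hg t).continuousAt.continuousWithinAt) (fun t _ => (hg t).hasDerivWithinAt) h₀
    (fun t ht => hKb (Ico_subset_Icc_self ht)) t ht

theorem eq_zero_of_norm_deriv_le {F : Type*} [NormedAddCommGroup F] [NormedSpace ℝ F]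
    {g g' : ℝ → F} (hg : ∀ t, HasDerivAt g (g' t) t)
    (hK : ∀ t₀, ∃ K, ∀ᶠ t in 𝓝 t₀, ‖g' t‖ ≤ K * ‖g t‖) {a : ℝ} (ha : g a = 0) (t : ℝ) :
    g t = 0 := by
  have hg_neg : ∀ t, HasDerivAt (fun s => g (-s)) (-g' (-t)) t := fun t => by
    simpa using (hg (0 - t)).comp_const_sub 0 t
  suffices IsClopen {t | g t = 0} from (this.eq_univ ⟨a, ha⟩).ge (mem_univ t)
  refine ⟨isClosed_eq (continuous_iff_continuousAt.2 fun t => (hg t).continuousAt)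
    continuous_const, isOpen_iff_mem_nhds.2 fun t₀ h₀ => ?_⟩
  obtain ⟨K, hK⟩ := hK t₀
  rw [← nhdsLE_sup_nhdsGE, mem_sup]
  refine ⟨?_, eventually_nhdsGE_eq_zero_of_norm_deriv_le hg hK h₀⟩
  have hK_neg : ∀ᶠ s in 𝓝 (-t₀), ‖-g' (-s)‖ ≤ K * ‖g (-s)‖ := by
    rw [← neg_neg t₀] at hK
    simpa using (continuous_neg.tendsto (-t₀)).eventually hK
  have := eventually_nhdsGE_eq_zero_of_norm_deriv_le hg_neg hK_neg (by simpa using h₀)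
  exact (by simpa using tendsto_neg_nhdsLE.eventually this : ∀ᶠ t in 𝓝[≤] t₀, g t = 0)

section Flow

variable {V : E → E} {ψ : ℝ → E → E}

theorem eq_of_hasDerivAt_of_contDiff (hV : ContDiff ℝ 1 V) {γ₁ γ₂ : ℝ → E}
    (h₁ : ∀ t, HasDerivAt γ₁ (V (γ₁ t)) t) (h₂ : ∀ t, HasDerivAt γ₂ (V (γ₂ t)) t) {t₀ : ℝ}
    (h : γ₁ t₀ = γ₂ t₀) : γ₁ = γ₂ := by
  suffices IsClopen {t | γ₁ t = γ₂ t} from funext fun t => (this.eq_univ ⟨t₀, h⟩).ge (mem_univ t)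
  refine ⟨isClosed_eq (continuous_iff_continuousAt.2 fun t => (h₁ t).continuousAt)
    (continuous_iff_continuousAt.2 fun t => (h₂ t).continuousAt),
    isOpen_iff_mem_nhds.2 fun t ht => ?_⟩
  obtain ⟨K, U, hU, hlip⟩ := (hV.contDiffAt (x := γ₁ t)).exists_lipschitzOnWith
  have hγ₁ : ∀ᶠ r in 𝓝 t, HasDerivAt γ₁ (V (γ₁ r)) r ∧ γ₁ r ∈ U :=
    ((h₁ t).continuousAt.eventually_mem hU).mono fun r hr => ⟨h₁ r, hr⟩
  have hγ₂ : ∀ᶠ r in 𝓝 t, HasDerivAt γ₂ (V (γ₂ r)) r ∧ γ₂ r ∈ U :=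
    ((h₂ t).continuousAt.eventually_mem (ht ▸ hU)).mono
      fun r hr => ⟨h₂ r, hr⟩
  exact ODE_solution_unique_of_eventually (v := fun _ => V) (Eventually.of_forall fun _ => hlip)
    hγ₁ hγ₂ ht

theorem flow_add (hV : ContDiff ℝ 1 V) (hψ0 : ∀ x, ψ 0 x = x)
    (hψ : ∀ t x, HasDerivAt (fun s => ψ s x) (V (ψ t x)) t) (s t : ℝ) :
    ψ (s + t) = ψ s ∘ ψ t := by
  funext x
  have := eq_of_hasDerivAt_of_contDiff hV (t₀ := 0) (fun r => (hψ (r + t) x).comp_add_const r t)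
    (hψ · (ψ t x)) (by simp [hψ0])
  exact congrFun this s

theorem mem_closedBall_of_hasDerivAt {γ : ℝ → E} (hγ : ∀ r, HasDerivAt γ (V (γ r)) r)
    {y : E} {ρ C T : ℝ} (hC₀ : 0 ≤ C) (hC : ∀ ξ ∈ closedBall y ρ, ‖V ξ‖ ≤ C)
    (hT : dist (γ 0) y + (C + 1) * T ≤ ρ) : ∀ r ∈ Icc 0 T, γ r ∈ closedBall y ρ := by
  have hB : ∀ r, HasDerivAt (fun r => dist (γ 0) y + (C + 1) * r) (C + 1) r := fun r => by
    simpa using ((hasDerivAt_id r).const_mul (C + 1)).const_add (dist (γ 0) y)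
  intro r hr
  have := image_norm_le_of_norm_deriv_right_lt_deriv_boundary (f := fun r => γ r - y)
    (fun r _ => (hγ r).continuousAt.continuousWithinAt.sub continuousWithinAt_const)
    (fun r _ => ((hγ r).sub_const y).hasDerivWithinAt) (by simp [dist_eq_norm]) hB
    (fun r hr hr' => ?_) hr
  · rw [mem_closedBall, dist_eq_norm]
    nlinarith [hr.2, hr.1]
  · have hγr : γ r ∈ closedBall y ρ := by
      rw [mem_closedBall, dist_eq_norm, hr']
      nlinarith [hr.2]
    exact (hC _ hγr).trans_lt (lt_add_one C)

theorem norm_sub_le_of_lipschitzOnWith {K : NNReal} {B : Set E} (hV : LipschitzOnWith K V B)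
    {γ₁ γ₂ : ℝ → E} (h₁ : ∀ r, HasDerivAt γ₁ (V (γ₁ r)) r)
    (h₂ : ∀ r, HasDerivAt γ₂ (V (γ₂ r)) r) {s : ℝ} (hmem : ∀ r ∈ Icc 0 s, γ₁ r ∈ B ∧ γ₂ r ∈ B) :
    ∀ r ∈ Icc 0 s, ‖γ₁ r - γ₂ r‖ ≤ ‖γ₁ 0 - γ₂ 0‖ * Real.exp (K * s) := by
  intro r hr
  have := dist_le_of_trajectories_ODE_of_mem (v := fun _ => V)
    (fun _ _ => hV) (fun r _ => (h₁ r).continuousAt.continuousWithinAt)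
    (fun r _ => (h₁ r).hasDerivWithinAt) (fun r hr => (hmem r (Ico_subset_Icc_self hr)).1)
    (fun r _ => (h₂ r).continuousAt.continuousWithinAt) (fun r _ => (h₂ r).hasDerivWithinAt)
    (fun r hr => (hmem r (Ico_subset_Icc_self hr)).2) (dist_eq_norm _ _).le r hr
  rw [dist_eq_norm, sub_zero] at this
  exact this.trans (by gcongr; exact hr.2)

theorem norm_sub_sub_le_of_lipschitzOnWith {K : NNReal} {B : Set E}
    (hV : LipschitzOnWith K V B) {γ₁ γ₂ : ℝ → E} (h₁ : ∀ r, HasDerivAt γ₁ (V (γ₁ r)) r)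
    (h₂ : ∀ r, HasDerivAt γ₂ (V (γ₂ r)) r) {s : ℝ} (hmem : ∀ r ∈ Icc 0 s, γ₁ r ∈ B ∧ γ₂ r ∈ B) :
    ∀ r ∈ Icc 0 s, ‖γ₁ r - γ₂ r - (γ₁ 0 - γ₂ 0)‖ ≤
      K * (‖γ₁ 0 - γ₂ 0‖ * Real.exp (K * s)) * r := by
  intro r hr
  simpa using norm_image_sub_le_of_norm_deriv_le_segment' (f := fun r => γ₁ r - γ₂ r)
    (fun r _ => ((h₁ r).sub (h₂ r)).hasDerivWithinAt)
    (fun r hr => by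
      obtain ⟨h₁r, h₂r⟩ := hmem r (Ico_subset_Icc_self hr)
      rw [← dist_eq_norm]
      refine (hV.dist_le_mul _ h₁r _ h₂r).trans ?_
      rw [dist_eq_norm]
      exact mul_le_mul_of_nonneg_left
        (norm_sub_le_of_lipschitzOnWith hV h₁ h₂ hmem r (Ico_subset_Icc_self hr)) K.2) r hr

theorem norm_sub_sub_smul_le_of_norm_fderiv_sub_le {B : Set E} (hB : Convex ℝ B)
    (hVd : ∀ ξ ∈ B, DifferentiableAt ℝ V ξ) {A : E →L[ℝ] E} {ε : ℝ}
    (hA : ∀ ξ ∈ B, ‖fderiv ℝ V ξ - A‖ ≤ ε) {γ₁ γ₂ : ℝ → E}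
    (h₁ : ∀ r, HasDerivAt γ₁ (V (γ₁ r)) r) (h₂ : ∀ r, HasDerivAt γ₂ (V (γ₂ r)) r) {s : ℝ}
    (hs : 0 ≤ s) (hmem : ∀ r ∈ Icc 0 s, γ₁ r ∈ B ∧ γ₂ r ∈ B) :
    ‖γ₁ s - γ₂ s - (γ₁ 0 - γ₂ 0) - s • A (γ₁ 0 - γ₂ 0)‖ ≤
      (ε + ‖A‖ * (‖A‖ + ε) * s) * Real.exp ((‖A‖ + ε) * s) * s * ‖γ₁ 0 - γ₂ 0‖ := by
  set u := γ₁ 0 - γ₂ 0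
  set L := ‖A‖ + ε
  have hε : 0 ≤ ε := (norm_nonneg _).trans (hA _ (hmem 0 ⟨le_rfl, hs⟩).1)
  have hL : 0 ≤ L := by positivity
  have hVA : ∀ a ∈ B, ∀ b ∈ B, ‖V a - V b - A (a - b)‖ ≤ ε * ‖a - b‖ := fun a ha b hb =>
    hB.norm_image_sub_le_of_norm_fderiv_le' hVd hA hb ha
  have hVlip : ∀ a ∈ B, ∀ b ∈ B, ‖V a - V b‖ ≤ L * ‖a - b‖ := fun a ha b hb => by
    have := norm_le_norm_add_norm_sub' (V a - V b) (A (a - b))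
    nlinarith [hVA a ha b hb, A.le_opNorm (a - b)]
  have hlip : LipschitzOnWith ⟨L, hL⟩ V B := LipschitzOnWith.of_dist_le_mul
    fun a ha b hb => by rw [dist_eq_norm, dist_eq_norm]; exact hVlip a ha b hb
  have hsep : ∀ r ∈ Icc 0 s, ‖γ₁ r - γ₂ r‖ ≤ ‖u‖ * Real.exp (L * s) :=
    norm_sub_le_of_lipschitzOnWith hlip h₁ h₂ hmem
  have hdrift : ∀ r ∈ Icc 0 s, ‖γ₁ r - γ₂ r - u‖ ≤ L * (‖u‖ * Real.exp (L * s)) * r :=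
    norm_sub_sub_le_of_lipschitzOnWith hlip h₁ h₂ hmem
  have hderiv : ∀ r ∈ Ico 0 s, ‖V (γ₁ r) - V (γ₂ r) - A u‖ ≤
      (ε + ‖A‖ * L * s) * Real.exp (L * s) * ‖u‖ := by
    intro r hr
    obtain ⟨h₁r, h₂r⟩ := hmem r (Ico_subset_Icc_self hr)
    have hsplit : V (γ₁ r) - V (γ₂ r) - A u =
        (V (γ₁ r) - V (γ₂ r) - A (γ₁ r - γ₂ r)) + A (γ₁ r - γ₂ r - u) := by
      rw [map_sub A (γ₁ r - γ₂ r) u]; abel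
    calc ‖V (γ₁ r) - V (γ₂ r) - A u‖
        ≤ ε * ‖γ₁ r - γ₂ r‖ + ‖A‖ * ‖γ₁ r - γ₂ r - u‖ := by
          rw [hsplit]
          exact (norm_add_le _ _).trans (add_le_add (hVA _ h₁r _ h₂r) (A.le_opNorm _))
      _ ≤ ε * (‖u‖ * Real.exp (L * s)) + ‖A‖ * (L * (‖u‖ * Real.exp (L * s)) * s) := by
          gcongr
          exacts [hsep r (Ico_subset_Icc_self hr),
            (hdrift r (Ico_subset_Icc_self hr)).trans (by gcongr; exact hr.2.le)]
      _ = (ε + ‖A‖ * L * s) * Real.exp (L * s) * ‖u‖ := by ring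
  have := norm_image_sub_le_of_norm_deriv_le_segment' (f := fun r => γ₁ r - γ₂ r - r • A u)
    (fun r _ => (((h₁ r).sub (h₂ r)).sub
      ((hasDerivAt_id r).smul_const (A u))).hasDerivWithinAt.congr_deriv (by simp))
    hderiv s ⟨hs, le_rfl⟩
  calc _ = ‖(γ₁ s - γ₂ s - s • A u) - (γ₁ 0 - γ₂ 0 - (0 : ℝ) • A u)‖ := by
        rw [zero_smul, sub_zero, sub_right_comm]
    _ ≤ _ := this
    _ = _ := by ring

theorem eventually_norm_flow_sub_sub_smul_le (hV : ContDiff ℝ 1 V) (hψ0 : ∀ x, ψ 0 x = x)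
    (hψ : ∀ t x, HasDerivAt (fun s => ψ s x) (V (ψ t x)) t) (y : E) {c : ℝ} (hc : 0 < c) :
    ∃ ρ > 0, ∀ᶠ s in 𝓝[≥] 0, ∀ z ∈ closedBall y ρ,
      ‖ψ s z - ψ s y - (z - y) - s • fderiv ℝ V y (z - y)‖ ≤ c * s * ‖z - y‖ := by
  set A := fderiv ℝ V y
  have hVd : Differentiable ℝ V := hV.differentiable one_ne_zero
  obtain ⟨ρ, hρ, hball⟩ : ∃ ρ > 0, ∀ ξ ∈ closedBall y ρ,
      ‖fderiv ℝ V ξ - A‖ ≤ c / 2 ∧ ‖V ξ‖ ≤ ‖V y‖ + 1 := by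
    have h₁ : ∀ᶠ ξ in 𝓝 y, ‖fderiv ℝ V ξ - A‖ < c / 2 :=
      ((hV.continuous_fderiv one_ne_zero).sub continuous_const).norm.continuousAt.eventually_lt
        continuousAt_const (by simpa [A] using half_pos hc)
    have h₂ : ∀ᶠ ξ in 𝓝 y, ‖V ξ‖ < ‖V y‖ + 1 :=
      hVd.continuous.norm.continuousAt.eventually_lt continuousAt_const (lt_add_one _)
    obtain ⟨ρ, hρ, h⟩ := nhds_basis_closedBall.eventually_iff.1 (h₁.and h₂)
    exact ⟨ρ, hρ, fun ξ hξ => ⟨(h hξ).1.le, (h hξ).2.le⟩⟩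
  have hcoef : ∀ᶠ s in 𝓝 (0 : ℝ),
      (c / 2 + ‖A‖ * (‖A‖ + c / 2) * s) * Real.exp ((‖A‖ + c / 2) * s) < c :=
    ContinuousAt.eventually_lt (by fun_prop) continuousAt_const (by simp; linarith)
  have hT : 0 < ρ / (2 * (‖V y‖ + 2)) := by positivity
  refine ⟨ρ / 2, half_pos hρ, ?_⟩
  filter_upwards [Icc_mem_nhdsGE hT, nhdsWithin_le_nhds hcoef] with s hs hcs
  have hconf : ∀ x ∈ closedBall y (ρ / 2), ∀ r ∈ Icc 0 s, ψ r x ∈ closedBall y ρ := by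
    intro x hx
    refine mem_closedBall_of_hasDerivAt (hψ · x) (by positivity) (fun ξ hξ => (hball ξ hξ).2) ?_
    have : (‖V y‖ + 1 + 1) * s ≤ ρ / 2 := by
      have := hs.2
      rw [le_div_iff₀ (by positivity)] at this
      nlinarith
    rw [hψ0]
    linarith [mem_closedBall.1 hx]
  intro z hz
  have := norm_sub_sub_smul_le_of_norm_fderiv_sub_le (convex_closedBall y ρ)
    (fun ξ _ => hVd ξ) (fun ξ hξ => (hball ξ hξ).1) (hψ · z) (hψ · y) hs.1
    (fun r hr => ⟨hconf z hz r hr, hconf y (mem_closedBall_self (by positivity)) r hr⟩)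
  simp only [hψ0] at this
  exact this.trans (by gcongr; exact hs.1)

theorem hasDerivWithinAt_fderiv_flow_Ici (hV : ContDiff ℝ 1 V) (hψ0 : ∀ x, ψ 0 x = x)
    (hψ : ∀ t x, HasDerivAt (fun s => ψ s x) (V (ψ t x)) t)
    (hψd : ∀ t, Differentiable ℝ (ψ t)) (y : E) :
    HasDerivWithinAt (fun s => fderiv ℝ (ψ s) y) (fderiv ℝ V y) (Ici 0) 0 := by
  rw [hasDerivWithinAt_iff_isLittleO, Asymptotics.isLittleO_iff]
  intro c hc
  obtain ⟨ρ, hρ, hest⟩ := eventually_norm_flow_sub_sub_smul_le hV hψ0 hψ y hc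
  filter_upwards [hest, self_mem_nhdsWithin] with s hs (hs₀ : 0 ≤ s)
  have hf : HasFDerivAt (fun z => ψ s z - z - s • fderiv ℝ V y z)
      (fderiv ℝ (ψ s) y - ContinuousLinearMap.id ℝ E - s • fderiv ℝ V y) y :=
    ((hψd s y).hasFDerivAt.sub (hasFDerivAt_id y)).sub
      ((fderiv ℝ V y).hasFDerivAt.const_smul s)
  have hnorm := hf.le_of_lip' (mul_nonneg hc.le hs₀) <| by
    filter_upwards [closedBall_mem_nhds y hρ] with z hz
    convert hs z hz using 2
    simp only [map_sub, smul_sub]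
    abel
  have h0 : fderiv ℝ (ψ 0) y = ContinuousLinearMap.id ℝ E := by
    rw [show ψ 0 = id from funext hψ0]; exact fderiv_id
  rwa [h0, sub_zero, Real.norm_of_nonneg hs₀]

theorem hasDerivAt_fderiv_flow_zero (hV : ContDiff ℝ 1 V) (hψ0 : ∀ x, ψ 0 x = x)
    (hψ : ∀ t x, HasDerivAt (fun s => ψ s x) (V (ψ t x)) t)
    (hψd : ∀ t, Differentiable ℝ (ψ t)) (y : E) :
    HasDerivAt (fun s => fderiv ℝ (ψ s) y) (fderiv ℝ V y) 0 := by
  have hback : HasDerivWithinAt (fun s => fderiv ℝ (ψ (-s)) y) (-fderiv ℝ V y) (Ici (-0)) (-0) := by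
    simpa [fderiv_neg] using hasDerivWithinAt_fderiv_flow_Ici (V := fun x => -V x)
      (ψ := fun s => ψ (-s)) hV.neg (by simpa using hψ0)
      (fun t x => by simpa using (hψ (0 - t) x).comp_const_sub 0 t) (fun t => hψd (-t)) y
  have hleft : HasDerivWithinAt (fun s => fderiv ℝ (ψ s) y) (fderiv ℝ V y) (Iic 0) 0 := by
    simpa [Function.comp_def] using
      hback.scomp 0 (hasDerivWithinAt_neg 0 (Iic 0)) fun s hs => by simpa using hs
  rw [← hasDerivWithinAt_univ, ← Iic_union_Ici]
  exact hleft.union (hasDerivWithinAt_fderiv_flow_Ici hV hψ0 hψ hψd y)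

theorem hasDerivAt_fderiv_flow_apply (hV : ContDiff ℝ 1 V) (hψ0 : ∀ x, ψ 0 x = x)
    (hψ : ∀ t x, HasDerivAt (fun s => ψ s x) (V (ψ t x)) t)
    (hψd : ∀ t, Differentiable ℝ (ψ t)) (x v : E) (t : ℝ) :
    HasDerivAt (fun t => fderiv ℝ (ψ t) x v)
      (fderiv ℝ V (ψ t x) (fderiv ℝ (ψ t) x v)) t := by
  have hshift : ∀ s, fderiv ℝ (ψ (s + t)) x v = fderiv ℝ (ψ s) (ψ t x) (fderiv ℝ (ψ t) x v) :=
    fun s => by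
      rw [flow_add hV hψ0 hψ, fderiv_comp x (hψd s _) (hψd t x)]
      rfl
  have := ((hasDerivAt_fderiv_flow_zero hV hψ0 hψ hψd (ψ t x)).clm_apply
    (hasDerivAt_const 0 (fderiv ℝ (ψ t) x v)))
  simp only [← hshift, map_zero, add_zero] at this
  have h := HasDerivAt.comp_sub_const t t (by simpa using this)
  simp only [sub_add_cancel] at h
  exact h

end Flow

theorem LinearIndependent.exists_apply_eq_ite {ι 𝕜 V : Type*} [Finite ι] [DecidableEq ι]
    [Field 𝕜] [AddCommGroup V] [Module 𝕜 V] {f : ι → V →ₗ[𝕜] 𝕜} (hf : LinearIndependent 𝕜 f) :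
    ∃ u : ι → V, ∀ k l, f k (u l) = if k = l then 1 else 0 := by
  have hspan := span_flip_eq_top_iff_linearIndependent.2
    (hf.map' (LinearMap.ltoFun 𝕜 V 𝕜 𝕜) (LinearMap.ker_eq_bot.2 DFunLike.coe_injective))
  have hrange :
      Set.range (flip (LinearMap.ltoFun 𝕜 V 𝕜 𝕜 ∘ f)) = LinearMap.range (LinearMap.pi f) := by
    ext; simp [flip, funext_iff]
  rw [hrange, Submodule.span_eq, LinearMap.range_eq_top] at hspan
  choose u hu using fun l => hspan (Pi.single l 1)
  exact ⟨u, fun k l => by simpa [Pi.single_apply, eq_comm] using congrFun (hu l) k⟩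

theorem contDiff_det_of_contDiff_entries {ι : Type*} [Fintype ι] [DecidableEq ι]
    {k : WithTop ℕ∞} {A : E → Matrix ι ι ℝ} (hA : ∀ i j, ContDiff ℝ k fun x => A x i j) :
    ContDiff ℝ k fun x => (A x).det := by
  simp_rw [Matrix.det_apply']
  exact ContDiff.sum fun σ _ => contDiff_const.mul (contDiff_prod fun i _ => hA _ _)

theorem contDiff_adjugate_of_contDiff_entries {ι : Type*} [Fintype ι] [DecidableEq ι]
    {k : WithTop ℕ∞} {A : E → Matrix ι ι ℝ} (hA : ∀ i j, ContDiff ℝ k fun x => A x i j)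
    (i j : ι) : ContDiff ℝ k fun x => (A x).adjugate i j := by
  simp_rw [Matrix.adjugate_apply]
  refine contDiff_det_of_contDiff_entries fun a b => ?_
  simp_rw [Matrix.updateRow_apply]
  split_ifs
  exacts [contDiff_const, hA a b]

section Frame

variable {ι : Type*} [Fintype ι] [DecidableEq ι] (ω : ι → E → E →L[ℝ] ℝ) (u : ι → E)

def formMatrix (z : E) : Matrix ι ι ℝ := Matrix.of fun k l => ω k z (u l)

/-- Using the adjugate instead of the inverse of `formMatrix` gives `ωᵏ(adjFrame l) = det · δₖₗ`
everywhere, so `frameProj z w`, which is `det` times the projection of `w` onto `⋂ₖ ker ωᵏ(z)` along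
this frame, is smooth in `z` on all of `E`. -/
def adjFrame (z : E) (l : ι) : E := ∑ m, (formMatrix ω u z).adjugate m l • u m

def frameProj (z w : E) : E := (formMatrix ω u z).det • w - ∑ l, ω l z w • adjFrame ω u z l

variable {ω u}

theorem apply_adjFrame (z : E) (k l : ι) :
    ω k z (adjFrame ω u z l) = if k = l then (formMatrix ω u z).det else 0 := by
  have := congrFun (congrFun (Matrix.mul_adjugate (formMatrix ω u z)) k) l
  simp only [Matrix.mul_apply, Matrix.smul_apply, Matrix.one_apply, smul_eq_mul, mul_ite,
    mul_one, mul_zero] at this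
  simp only [adjFrame, map_sum, map_smul, smul_eq_mul, ← this]
  exact Finset.sum_congr rfl fun m _ => mul_comm _ _

theorem apply_frameProj (z w : E) (k : ι) : ω k z (frameProj ω u z w) = 0 := by
  simp [frameProj, apply_adjFrame, mul_comm]

theorem contDiff_frameProj {k : WithTop ℕ∞} (hω : ∀ i, ContDiff ℝ k (ω i)) (w : E) :
    ContDiff ℝ k fun z => frameProj ω u z w := by
  have hM : ∀ i j, ContDiff ℝ k fun z => formMatrix ω u z i j := fun i j =>
    (hω i).clm_apply contDiff_const
  refine ((contDiff_det_of_contDiff_entries hM).smul contDiff_const).sub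
    (ContDiff.sum fun l _ => ((hω l).clm_apply contDiff_const).smul
      (ContDiff.sum fun m _ => (contDiff_adjugate_of_contDiff_entries hM m l).smul contDiff_const))

theorem det_mul_apply_eq_sum {Ψ : E →L[ℝ] ℝ} {z : E} (hΨ : ∀ v, (∀ k, ω k z v = 0) → Ψ v = 0)
    (w : E) : (formMatrix ω u z).det * Ψ w = ∑ l, ω l z w * Ψ (adjFrame ω u z l) := by
  have := hΨ (frameProj ω u z w) (apply_frameProj z w)
  simp only [frameProj, map_sub, map_smul, map_sum, smul_eq_mul] at this
  linarith

end Frame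

def lieDeriv (X : E → E) (α : E → E →L[ℝ] ℝ) (z : E) : E →L[ℝ] ℝ :=
  fderiv ℝ α z (X z) + (α z).comp (fderiv ℝ X z)

theorem continuous_lieDeriv {X : E → E} {α : E → E →L[ℝ] ℝ} (hX : ContDiff ℝ 1 X)
    (hα : ContDiff ℝ 1 α) : Continuous (lieDeriv X α) :=
  ((hα.continuous_fderiv one_ne_zero).clm_apply hX.continuous).add
    (hα.continuous.clm_comp (hX.continuous_fderiv one_ne_zero))

theorem lieDeriv_apply_eq_zero_of_mem_Sec {D : E → Submodule ℝ E} {α : E → E →L[ℝ] ℝ}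
    (hα : Differentiable ℝ α) (hαD : ∀ z, ∀ u ∈ D z, α z u = 0)
    (hinv : ∀ Y ∈ Sec D, ∀ Z ∈ Sec D, ∀ x : E, lieBracket Y Z x ∈ D x)
    {X U : E → E} (hX : X ∈ Sec D) (hU : U ∈ Sec D) (z : E) : lieDeriv X α z (U z) = 0 := by
  have hUd : Differentiable ℝ U := hU.1.differentiable (by simp)
  have hαU : fderiv ℝ (fun ζ => α ζ (U ζ)) z = 0 := by
    simp [funext fun ζ => hαD ζ _ (hU.2 ζ)]
  have hderiv := congrArg (· (X z)) ((fderiv_clm_apply (hα z) (hUd z)).symm.trans hαU)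
  have hbracket := hαD z _ (hinv X hX U hU z)
  simp only [lieBracket, map_sub, add_apply, ContinuousLinearMap.comp_apply,
    ContinuousLinearMap.flip_apply, zero_apply] at hderiv hbracket
  simp only [lieDeriv, add_apply, ContinuousLinearMap.comp_apply]
  linarith

theorem mem_iff_forall_apply_eq_zero {ι : Type*} {ω : ι → E → E →L[ℝ] ℝ}
    {D : E → Submodule ℝ E} (hD : ∀ x, D x = ⨅ i, LinearMap.ker (ω i x : E →ₗ[ℝ] ℝ)) {z u : E} :
    u ∈ D z ↔ ∀ k, ω k z u = 0 := by
  simp [hD]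

section Distribution

variable {ι : Type*} [Fintype ι] [DecidableEq ι] {ω : ι → E → E →L[ℝ] ℝ}

theorem exists_formMatrix_eq_one {z₀ : E} (hind : LinearIndependent ℝ fun i => ω i z₀) :
    ∃ e : ι → E, formMatrix ω e z₀ = 1 := by
  obtain ⟨e, he⟩ := (hind.map' (ContinuousLinearMap.coeLM ℝ)
    (LinearMap.ker_eq_bot.2 ContinuousLinearMap.coe_injective)).exists_apply_eq_ite
  exact ⟨e, by ext k l; simpa [formMatrix, Matrix.one_apply] using he k l⟩

theorem exists_mem_Sec_apply_eq {D : E → Submodule ℝ E} (hω : ∀ i, ContDiff ℝ (⊤ : ℕ∞) (ω i))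
    (hind : ∀ x, LinearIndependent ℝ fun i => ω i x)
    (hD : ∀ x, D x = ⨅ i, LinearMap.ker (ω i x : E →ₗ[ℝ] ℝ)) {z₀ u : E} (hu : u ∈ D z₀) :
    ∃ U ∈ Sec D, U z₀ = u := by
  obtain ⟨e, he⟩ := exists_formMatrix_eq_one (hind z₀)
  refine ⟨fun z => frameProj ω e z u, ⟨contDiff_frameProj hω u,
    fun z => (mem_iff_forall_apply_eq_zero hD).2 (apply_frameProj z u)⟩, ?_⟩
  simp [frameProj, he, (mem_iff_forall_apply_eq_zero hD).1 hu]

theorem exists_eventually_norm_le_mul_norm {ι' : Type*} [Fintype ι']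
    (hω : ∀ i, Continuous (ω i)) (hind : ∀ x, LinearIndependent ℝ fun i => ω i x)
    {Ψ : ι' → E → E →L[ℝ] ℝ} (hΨ : ∀ j, Continuous (Ψ j))
    (hΨω : ∀ j z v, (∀ k, ω k z v = 0) → Ψ j z v = 0) (z₀ : E) :
    ∃ K, ∀ᶠ z in 𝓝 z₀, ∀ w, ‖fun j => Ψ j z w‖ ≤ K * ‖fun k => ω k z w‖ := by
  obtain ⟨e, he⟩ := exists_formMatrix_eq_one (hind z₀)
  have hM : Continuous (formMatrix ω e) :=
    continuous_matrix fun k l => (hω k).clm_apply continuous_const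
  have hcoef : ∀ j l, Continuous fun z => Ψ j z (adjFrame ω e z l) := fun j l =>
    (hΨ j).clm_apply (continuous_finsetSum _ fun m _ =>
      ((continuous_apply l).comp ((continuous_apply m).comp hM.matrix_adjugate)).smul
        continuous_const)
  set c : ι' → ι → ℝ := fun j l => |Ψ j z₀ (adjFrame ω e z₀ l)| + 1
  have hdet : ∀ᶠ z in 𝓝 z₀, 1 / 2 < (formMatrix ω e z).det :=
    continuousAt_const.eventually_lt hM.matrix_det.continuousAt
      (by rw [he, Matrix.det_one]; norm_num)
  have hc : ∀ᶠ z in 𝓝 z₀, ∀ j l, |Ψ j z (adjFrame ω e z l)| < c j l :=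
    eventually_all.2 fun j => eventually_all.2 fun l =>
      (hcoef j l).abs.continuousAt.eventually_lt continuousAt_const (lt_add_one _)
  refine ⟨2 * ∑ j, ∑ l, c j l, ?_⟩
  filter_upwards [hdet, hc] with z hz hcz w
  refine (pi_norm_le_iff_of_nonneg (by positivity)).2 fun j => ?_
  set N := ‖fun k => ω k z w‖
  have hsum : |(formMatrix ω e z).det * Ψ j z w| ≤ (∑ l, c j l) * N := by
    rw [det_mul_apply_eq_sum (hΨω j z) w, Finset.sum_mul]
    refine (Finset.abs_sum_le_sum_abs _ _).trans (Finset.sum_le_sum fun l _ => ?_)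
    rw [abs_mul, mul_comm (c j l)]
    exact mul_le_mul (norm_le_pi_norm (fun k => ω k z w) l) (hcz j l).le (abs_nonneg _)
      (norm_nonneg _)
  have hj : ∑ l, c j l ≤ ∑ j, ∑ l, c j l :=
    Finset.single_le_sum (fun j _ => Finset.sum_nonneg fun l _ => by positivity)
      (Finset.mem_univ j)
  rw [abs_mul, abs_of_pos (by linarith)] at hsum
  calc ‖Ψ j z w‖ = |Ψ j z w| := Real.norm_eq_abs _
    _ ≤ 2 * ((formMatrix ω e z).det * |Ψ j z w|) := by nlinarith [abs_nonneg (Ψ j z w)]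
    _ ≤ 2 * ((∑ l, c j l) * N) := by gcongr
    _ ≤ (2 * ∑ j, ∑ l, c j l) * N := by rw [mul_assoc]; gcongr

theorem lieDeriv_apply_eq_zero {D : E → Submodule ℝ E} (hω : ∀ i, ContDiff ℝ (⊤ : ℕ∞) (ω i))
    (hind : ∀ x, LinearIndependent ℝ fun i => ω i x)
    (hD : ∀ x, D x = ⨅ i, LinearMap.ker (ω i x : E →ₗ[ℝ] ℝ))
    (hinv : ∀ Y ∈ Sec D, ∀ Z ∈ Sec D, ∀ x : E, lieBracket Y Z x ∈ D x)
    {X : E → E} (hX : X ∈ Sec D) (i : ι) {z u : E} (hu : u ∈ D z) :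
    lieDeriv X (ω i) z u = 0 := by
  obtain ⟨U, hU, rfl⟩ := exists_mem_Sec_apply_eq hω hind hD hu
  exact lieDeriv_apply_eq_zero_of_mem_Sec ((hω i).differentiable (by simp))
    (fun z u hu => (mem_iff_forall_apply_eq_zero hD).1 hu i) hinv hX hU z

end Distribution

/-- If `D = ⋂ᵢ ker ωⁱ` is a completely integrable (involutive) distribution and `X` a
complete vector field belonging to `D` with flow `Fl^X_t = φ t`, then for every `t`
the pulled-back forms `(Fl^X_t)*ωⁱ` vanish on `D`. -/
theorem pullback_forms_vanish_along_flow
    (n : ℕ) (ω : Fin n → E → E →L[ℝ] ℝ)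
    (hω : ∀ i, ContDiff ℝ (⊤ : ℕ∞) (ω i))
    (hind : ∀ x : E, LinearIndependent ℝ fun i => ω i x)
    (D : E → Submodule ℝ E)
    (hD : ∀ x : E, D x = ⨅ i, LinearMap.ker (ω i x : E →ₗ[ℝ] ℝ))
    (hinv : ∀ Y ∈ Sec D, ∀ Z ∈ Sec D, ∀ x : E, lieBracket Y Z x ∈ D x)
    (X : E → E) (hX : X ∈ Sec D)
    (φ : ℝ → E → E)
    (hφ0 : ∀ x : E, φ 0 x = x)
    (hφ : ∀ (t : ℝ) (x : E), HasDerivAt (fun s => φ s x) (X (φ t x)) t)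
    (hφsm : ∀ t : ℝ, ContDiff ℝ (⊤ : ℕ∞) (φ t)) :
    ∀ (t : ℝ) (i : Fin n), ∀ x : E, ∀ v ∈ D x,
      ω i (φ t x) (fderiv ℝ (φ t) x v) = 0 := by
  intro t i x v hv
  have hX₁ : ContDiff ℝ 1 X := hX.1.of_le (by exact_mod_cast le_top)
  have hω₁ : ∀ j, ContDiff ℝ 1 (ω j) := fun j => (hω j).of_le (by exact_mod_cast le_top)
  have hφd : ∀ t, Differentiable ℝ (φ t) := fun t => (hφsm t).differentiable (by simp)
  have hg : ∀ s, HasDerivAt (fun s j => ω j (φ s x) (fderiv ℝ (φ s) x v))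
      (fun j => lieDeriv X (ω j) (φ s x) (fderiv ℝ (φ s) x v)) s := fun s =>
    hasDerivAt_pi.2 fun j => (((hω₁ j).differentiable one_ne_zero _).hasFDerivAt.comp_hasDerivAt
      s (hφ s x)).clm_apply (hasDerivAt_fderiv_flow_apply hX₁ hφ0 hφ hφd x v s)
  have hK : ∀ s₀, ∃ K, ∀ᶠ s in 𝓝 s₀,
      ‖fun j => lieDeriv X (ω j) (φ s x) (fderiv ℝ (φ s) x v)‖ ≤
        K * ‖fun j => ω j (φ s x) (fderiv ℝ (φ s) x v)‖ := fun s₀ => by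
    obtain ⟨K, hK⟩ := exists_eventually_norm_le_mul_norm (fun j => (hω j).continuous) hind
      (fun j => continuous_lieDeriv hX₁ (hω₁ j))
      (fun j z w hw => lieDeriv_apply_eq_zero hω hind hD hinv hX j
        ((mem_iff_forall_apply_eq_zero hD).2 hw)) (φ s₀ x)
    exact ⟨K, ((hφ s₀ x).continuousAt.eventually hK).mono fun s hs => hs _⟩
  have h₀ : (fun j => ω j (φ 0 x) (fderiv ℝ (φ 0) x v)) = 0 := by
    rw [show φ 0 = id from funext hφ0, fderiv_id]
    exact funext ((mem_iff_forall_apply_eq_zero hD).1 hv)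
  exact congrFun (eq_zero_of_norm_deriv_le hg hK h₀ t) i
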